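/- arXiv:1503.07577 — 3 statements merged into one kernel-verified Lean document; each statement's English description precedes it below -/
import Mathlib

section
/- Let 𝒜 be a family of subsets of ω, and suppose there is a sequence (Aₙ)ₙ of subsets of ω such that (1) every x ∈ 𝒜 is contained, modulo a finite set, in the union of finitely many Aₙ, and (2) for every n, the set ω \ (A₀ ∪ ⋯ ∪ Aₙ) is infinite. Then there exists an infinite set z ⊆ ω such that x ∩ z is finite for every x ∈ 𝒜. -/
/-!
Pick `f n > n` outside `A₀ ∪ ⋯ ∪ Aₙ` and let `z` be the range of `f`. Then `z` is unbounded, and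
`Aₖ` can only contain the points `f n` with `n < k`, so `z` meets each `Aₖ` in a finite set.
Since every `x ∈ 𝒜` is almost contained in finitely many `Aₖ`, `x ∩ z` is finite.
-/

open Set

theorem Set.Finite.inter_of_diff_biUnion {α ι : Type*} {x z : Set α} {A : ι → Set α}
    {F : Finset ι} (hx : (x \ ⋃ n ∈ F, A n).Finite) (hz : ∀ n ∈ F, (A n ∩ z).Finite) :
    (x ∩ z).Finite := by
  have hcover : x ∩ z ⊆ (x \ ⋃ n ∈ F, A n) ∪ ⋃ n ∈ F, A n ∩ z := by
    rw [← iUnion₂_inter]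
    rintro m ⟨hmx, hmz⟩
    by_cases hm : m ∈ ⋃ n ∈ F, A n
    · exact Or.inr ⟨hm, hmz⟩
    · exact Or.inl ⟨hmx, hm⟩
  exact (hx.union (F.finite_toSet.biUnion hz)).subset hcover

theorem Set.infinite_range_of_lt_apply {f : ℕ → ℕ} (hf : ∀ n, n < f n) :
    (range f).Infinite := by
  refine infinite_of_not_bddAbove fun ⟨M, hM⟩ => ?_
  exact (hf M).not_ge (hM (mem_range_self M))

theorem Set.finite_inter_range_of_apply_notMem {α : Type*} {f : ℕ → α} {A : ℕ → Set α}
    (hf : ∀ n, ∀ k ≤ n, f n ∉ A k) (k : ℕ) : (A k ∩ range f).Finite := by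
  refine ((finite_Iio k).image f).subset ?_
  rintro _ ⟨hA, n, rfl⟩
  exact ⟨n, not_le.1 fun hkn => hf n k hkn hA, rfl⟩

theorem easy_lemma (𝒜 : Set (Set ℕ)) (A : ℕ → Set ℕ)
    (h1 : ∀ x ∈ 𝒜, ∃ F : Finset ℕ, (x \ ⋃ n ∈ F, A n).Finite)
    (h2 : ∀ n : ℕ, ((⋃ i ∈ Finset.range (n + 1), A i)ᶜ : Set ℕ).Infinite) :
    ∃ z : Set ℕ, z.Infinite ∧ ∀ x ∈ 𝒜, (x ∩ z).Finite := by
  choose f hf_compl hf using fun n => (h2 n).exists_gt n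
  have hf_notMem : ∀ n, ∀ k ≤ n, f n ∉ A k := fun n k hkn hk =>
    hf_compl n (mem_biUnion (Finset.mem_range.2 (Nat.lt_succ_of_le hkn)) hk)
  refine ⟨range f, infinite_range_of_lt_apply hf, fun x hx => ?_⟩
  obtain ⟨F, hF⟩ := h1 x hx
  exact hF.inter_of_diff_biUnion fun n _ => finite_inter_range_of_apply_notMem hf_notMem n
end

section
/- Let N be an inner model (or more concretely: a transitive model of ZFC), ℙ ∈ N a forcing notion, σ a ℙ-name in N, and p ∈ ℙ a condition forcing that σ is a subset of ω not in N, such that (p, p) forces in ℙ × ℙ that if σ₀ ≠ σ₁ then σ₀ ∩ σ₁ is finite (where σ₀, σ₁ are the names for σ evaluated by the left and right generics). Then there is an infinite (ℙ, σ)-diagonal sequence below p. -/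
/-!
Nice-name forcing framework.  A condition `p` is stronger than `q` when `p ≤ q`.
A (nice) `ℙ`-name `σ` for a subset of `ω` is represented by the function assigning
to each `n` the set `σ n` of conditions putting `n` into `σ`.  Note that every nice
name automatically denotes a subset of `ω`, so the requirement `r ⊩ σ ⊆ ω` holds.
-/

/-- A nice `ℙ`-name for a subset of `ω`. -/
def NName (P : Type*) := ℕ → Set P

/-- `p ⊩ ň ∈ σ`: the set `σ n` is predense below `p`. -/
def forcesMem {P : Type*} [Preorder P] (σ : NName P) (p : P) (n : ℕ) : Prop :=
  ∀ q ≤ p, ∃ r ≤ q, ∃ s ∈ σ n, r ≤ s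

/-- `p ⊩ ň ∉ σ`: no extension of `p` forces `ň ∈ σ`. -/
def forcesNotMem {P : Type*} [Preorder P] (σ : NName P) (p : P) (n : ℕ) : Prop :=
  ∀ q ≤ p, ¬ ∃ s ∈ σ n, q ≤ s

/-- `x(σ, p) = { n ∈ ω : ∃ q ≤ p, q ⊩ ň ∈ σ }`. -/
def hull {P : Type*} [Preorder P] (σ : NName P) (p : P) : Set ℕ :=
  {n | ∃ q ≤ p, forcesMem σ q n}

/-- `p ⊩ σ = Ǎ` for a ground-model set `A ⊆ ω`. -/
def ForcesEqCheck {P : Type*} [Preorder P] (σ : NName P) (p : P) (A : Set ℕ) : Prop :=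
  ∀ n : ℕ, (n ∈ A → forcesMem σ p n) ∧ (n ∉ A → forcesNotMem σ p n)

/-- `(q, r) ⊩_{ℙ×ℙ} σ₀ ≠ σ₁`: densely below `(q, r)`, the two coordinates force
contradictory information about some `ň ∈ σ`. -/
def ForcesNe {P : Type*} [Preorder P] (σ : NName P) (q r : P) : Prop :=
  ∀ q' ≤ q, ∀ r' ≤ r, ∃ q'' ≤ q', ∃ r'' ≤ r', ∃ n : ℕ,
    (forcesMem σ q'' n ∧ forcesNotMem σ r'' n) ∨
    (forcesNotMem σ q'' n ∧ forcesMem σ r'' n)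

/-!
The inner model `N` is represented by its subsets of `ω`, and the hypothesis
`(p, p) ⊩ σ₀ ≠ σ₁ → |σ₀ ∩ σ₁| < ℵ₀` semantically: below any `(q, r) ≤ (p, p)` forcing
`σ₀ ≠ σ₁`, densely many pairs force `σ₀ ∩ σ₁ ⊆ m̌` for some `m`.

If `(q, r) ≤ (p, p)` did not force `σ₀ ≠ σ₁`, some `q' ≤ q` and `r' ≤ r` would have no
extensions disagreeing about any `ň ∈ σ`; then `q'` forces `σ = x(σ, r')`, a set in `N`.
So every such pair forces `σ₀ ≠ σ₁`, and the almost-disjointness hypothesis yields, below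
any `c ≤ p`, conditions `a, b ≤ c` with `x(σ, a) ∩ x(σ, b)` bounded. Iterating below `b`
gives the sequence.
-/

section

variable {P : Type*} [Preorder P] {σ : NName P}

-- `(p0 i, p1 i, bd i)` is the paper's `(pᵢ⁰, pᵢ¹, nᵢ)`, with `nᵢ` read as `Set.Iio nᵢ`.
def IsDiagonalSequence (σ : NName P) (p : P) (p0 p1 : ℕ → P) (bd : ℕ → ℕ) : Prop :=
  ∀ i : ℕ, p0 i ≤ p ∧ p1 i ≤ p ∧ p0 (i + 1) ≤ p1 i ∧ p1 (i + 1) ≤ p1 i ∧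
    hull σ (p0 i) ∩ hull σ (p1 i) ⊆ Set.Iio (bd i)

theorem forcesMem_of_le_of_mem {u s : P} {n : ℕ} (hs : s ∈ σ n) (hus : u ≤ s) :
    forcesMem σ u n :=
  fun w hw => ⟨w, le_rfl, s, hs, hw.trans hus⟩

theorem exists_forcesNotMem_of_not_forcesMem {q : P} {n : ℕ} (h : ¬ forcesMem σ q n) :
    ∃ w ≤ q, forcesNotMem σ w n := by
  unfold forcesMem at h
  push Not at h
  obtain ⟨w, hw, hwnot⟩ := h
  exact ⟨w, hw, fun v hv ⟨s, hs, hvs⟩ => hwnot v hv s hs hvs⟩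

theorem forcesEqCheck_hull_of_no_disagreement {q r : P}
    (h : ∀ q' ≤ q, ∀ r' ≤ r, ∀ n : ℕ, ¬ ((forcesMem σ q' n ∧ forcesNotMem σ r' n) ∨
      (forcesNotMem σ q' n ∧ forcesMem σ r' n))) :
    ForcesEqCheck σ q (hull σ r) := by
  intro n
  constructor
  · rintro ⟨w, hw, hwmem⟩
    by_contra hq
    obtain ⟨u, hu, hunot⟩ := exists_forcesNotMem_of_not_forcesMem hq
    exact h u hu w hw n (Or.inr ⟨hunot, hwmem⟩)
  · rintro hn u hu ⟨s, hs, hus⟩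
    obtain ⟨w, hw, hwnot⟩ :=
      exists_forcesNotMem_of_not_forcesMem fun hr => hn ⟨r, le_rfl, hr⟩
    exact h u hu w hw n (Or.inl ⟨forcesMem_of_le_of_mem hs hus, hwnot⟩)

theorem forcesNe_of_not_forcesEqCheck {N : Set (Set ℕ)} {q r : P}
    (hnot : ∀ q' ≤ q, ∀ A ∈ N, ¬ ForcesEqCheck σ q' A) (hN : ∀ r' ≤ r, hull σ r' ∈ N) :
    ForcesNe σ q r := by
  intro q' hq' r' hr'
  by_contra h
  exact hnot q' hq' (hull σ r') (hN r' hr') <| forcesEqCheck_hull_of_no_disagreement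
    fun q'' hq'' r'' hr'' n hn => h ⟨q'', hq'', r'', hr'', n, hn⟩

theorem exists_isDiagonalSequence {p : P}
    (h : ∀ c ≤ p, ∃ a ≤ c, ∃ b ≤ c, ∃ m : ℕ, hull σ a ∩ hull σ b ⊆ Set.Iio m) :
    ∃ p0 p1 bd, IsDiagonalSequence σ p p0 p1 bd := by
  choose a ha b hb m hm using fun c : Set.Iic p => h c c.2
  let c : ℕ → Set.Iic p := fun i =>
    Nat.rec ⟨p, le_rfl⟩ (fun _ c => ⟨b c, (hb c).trans c.2⟩) i
  exact ⟨fun i => a (c i), fun i => b (c i), fun i => m (c i), fun i =>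
    ⟨(ha _).trans (c i).2, (hb _).trans (c i).2, ha (c (i + 1)), hb (c (i + 1)), hm _⟩⟩

end

theorem exists_infinite_diagonal_sequence {P : Type*} [Preorder P]
    (N : Set (Set ℕ)) (σ : NName P) (p : P)
    (hσN : ∀ q : P, hull σ q ∈ N)
    (hnotinN : ∀ p' ≤ p, ∀ A ∈ N, ¬ ForcesEqCheck σ p' A)
    (hstar : ∀ q ≤ p, ∀ r ≤ p, ForcesNe σ q r →
      ∀ q' ≤ q, ∀ r' ≤ r, ∃ q'' ≤ q', ∃ r'' ≤ r', ∃ m : ℕ,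
        hull σ q'' ∩ hull σ r'' ⊆ Set.Iio m) :
    ∃ (p0 p1 : ℕ → P) (bd : ℕ → ℕ),
      ∀ i : ℕ, p0 i ≤ p ∧ p1 i ≤ p ∧
        p0 (i + 1) ≤ p1 i ∧ p1 (i + 1) ≤ p1 i ∧
        hull σ (p0 i) ∩ hull σ (p1 i) ⊆ Set.Iio (bd i) := by
  have hne : ∀ c ≤ p, ForcesNe σ c c := fun c hc =>
    forcesNe_of_not_forcesEqCheck (fun q hq => hnotinN q (hq.trans hc)) fun r _ => hσN r
  exact exists_isDiagonalSequence fun c hc => hstar c hc c hc (hne c hc) c le_rfl c le_rfl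
end

section
/- If T is a tree on 2 × ω such that p[T] is an almost disjoint family, and (tᵢʲ)_{i≤n} is a T-terminal finite diagonal sequence (one extended by no strictly longer diagonal sequence), then p[T_{[t¹ₙ]}], the projection of the part of T compatible with the top leaf t¹ₙ, contains at most one element. -/
/-- The subset of `ω` coded by a finite binary sequence `u`,
namely `{ n < length u : u n = 1 }`. -/
def codes (u : List Bool) : Set ℕ := {n | u.getD n false = true}

/-- Extension of nodes (pairs of finite sequences): both coordinates extend. -/
def NodeExt {K : Type*} (s t : List Bool × List K) : Prop := s.1 <+: t.1 ∧ s.2 <+: t.2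

/-- Incompatibility of finite binary sequences: neither is an initial segment
of the other. -/
def Incomp (u v : List Bool) : Prop := ¬ u <+: v ∧ ¬ v <+: u

/-- A tree on `2 × K`: a set of pairs of finite sequences of equal length,
closed under (simultaneous) initial segments. -/
def IsTree2 {K : Type*} (T : Set (List Bool × List K)) : Prop :=
  (∀ p ∈ T, p.1.length = p.2.length) ∧
  (∀ p ∈ T, ∀ n : ℕ, (p.1.take n, p.2.take n) ∈ T)

/-- The projection `p[T]` of the set of infinite branches of `T` onto the first
coordinate, viewed as a family of subsets of `ω`. -/
def proj {K : Type*} (T : Set (List Bool × List K)) : Set (Set ℕ) :=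
  { A | ∃ (x : ℕ → Bool) (y : ℕ → K),
      (∀ n : ℕ, ((List.ofFn fun i : Fin n => x i), (List.ofFn fun i : Fin n => y i)) ∈ T) ∧
      A = {n | x n = true} }

/-- A family of subsets of `ω` is almost disjoint if any two distinct members have
finite intersection. -/
def AlmostDisjointFam (𝒜 : Set (Set ℕ)) : Prop :=
  ∀ x ∈ 𝒜, ∀ y ∈ 𝒜, x = y ∨ (x ∩ y).Finite

/-- Two nodes are compatible if one extends the other. -/
def Compat {K : Type*} (s t : List Bool × List K) : Prop := NodeExt s t ∨ NodeExt t s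

/-- `T_{[t]}`: the nodes of `T` compatible with `t`. -/
def restrictT {K : Type*} (T : Set (List Bool × List K)) (t : List Bool × List K) :
    Set (List Bool × List K) := {s ∈ T | Compat s t}

/-- `(a, b)` is a "diagonal pair" in `T`: equal lengths, first coordinates
incompatible, intersections of coded first coordinates frozen among all extensions in
`T`, and nonempty projection above `a`. -/
def IsDiagPair {K : Type*} (T : Set (List Bool × List K)) (a b : List Bool × List K) : Prop :=
  a ∈ T ∧ b ∈ T ∧ a.1.length = b.1.length ∧ Incomp a.1 b.1 ∧
  (∀ s ∈ T, ∀ t ∈ T, NodeExt a s → NodeExt b t →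
    codes s.1 ∩ codes t.1 = codes a.1 ∩ codes b.1) ∧
  (proj (restrictT T a)).Nonempty

/-- A diagonal sequence in `T` of length `m`: `(t0 i, t1 i)` for `i < m`, with each
pair a diagonal pair and `t1 i` extended by both members of the next pair. -/
def DiagSeqUpTo {K : Type*} (T : Set (List Bool × List K)) (m : ℕ)
    (t0 t1 : ℕ → List Bool × List K) : Prop :=
  (∀ i, i < m → IsDiagPair T (t0 i) (t1 i)) ∧
  ∀ i, i + 1 < m → NodeExt (t1 i) (t0 (i + 1)) ∧ NodeExt (t1 i) (t1 (i + 1))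

/-- `T` admits an infinite diagonal sequence. -/
def HasInfDiagSeq {K : Type*} (T : Set (List Bool × List K)) : Prop :=
  ∃ t0 t1 : ℕ → List Bool × List K,
    ∀ i, IsDiagPair T (t0 i) (t1 i) ∧ NodeExt (t1 i) (t0 (i + 1)) ∧ NodeExt (t1 i) (t1 (i + 1))

/-!
Let `t = t¹ₙ` and suppose `p[T_{[t]}]` contains the sets coded by two branches `x`, `x'` through
`t` that differ at some `d`. It suffices to find a diagonal pair `(a, b)` with `t ⊑ a, b`, since it
would extend the diagonal sequence.

If some node `c ⊒ t` of length `> d` is a dead end of `T`, then `c` together with the node of the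
same length on whichever of `x`, `x'` differs from `c` at `d` is such a pair: `c` has no proper
extensions, so the intersection is frozen. Otherwise every node above `t` of length `> d` lies on a
branch. Almost disjointness yields extensions `s` of `x ↾ M` and `s'` of `x' ↾ M` with frozen
intersection: if there were none, both sides could be extended forever with ever larger
intersections, producing two distinct members of `p[T]` with infinite intersection. Branches
through `s` and `s'`, cut at a common length, give the pair.
-/

open Function

theorem List.getD_eq_of_isPrefix {α : Type*} {u v : List α} (h : u <+: v) {i : ℕ}
    (hi : i < u.length) (d : α) : v.getD i d = u.getD i d := by
  rw [List.getD_eq_getElem _ _ hi, List.getD_eq_getElem _ _ (hi.trans_le h.length_le),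
    h.getElem hi]

theorem List.ofFn_prefix_ofFn {α : Type*} (f : ℕ → α) {m m' : ℕ} (h : m ≤ m') :
    (List.ofFn fun i : Fin m => f i) <+: List.ofFn fun i : Fin m' => f i := by
  rw [List.prefix_iff_eq_take]
  apply List.ext_getElem <;> simp [h]

theorem exists_ofFn_eq_of_chain {α : Type*} {l : ℕ → List α} (hchain : ∀ k, l k <+: l (k + 1))
    (hlen : ∀ k, k ≤ (l k).length) :
    ∃ f : ℕ → α, ∀ k, (List.ofFn fun i : Fin (l k).length => f i) = l k := by
  have hmono : ∀ {j k}, j ≤ k → l j <+: l k := fun h =>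
    Nat.le_induction (List.prefix_refl _) (fun k _ ih => ih.trans (hchain k)) _ h
  refine ⟨fun i => (l (i + 1))[i]'(hlen (i + 1)), fun k => List.ext_getElem (by simp) ?_⟩
  intro i _ hi
  simp only [List.getElem_ofFn]
  rcases le_total (i + 1) k with h | h
  · exact (hmono h).getElem _
  · exact ((hmono h).getElem hi).symm

theorem exists_seq_of_forall_exists_step {α : Type*} {p : α → Prop} {r : α → α → Prop} {a₀ : α}
    (h₀ : p a₀) (h : ∀ a, p a → ∃ b, p b ∧ r a b) :
    ∃ f : ℕ → α, f 0 = a₀ ∧ ∀ k, p (f k) ∧ r (f k) (f (k + 1)) := by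
  choose! g hg using h
  have hp : ∀ k, p (g^[k] a₀) := by
    intro k
    induction k with
    | zero => exact h₀
    | succ k ih => rw [iterate_succ_apply']; exact (hg _ ih).1
  refine ⟨fun k => g^[k] a₀, rfl, fun k => ⟨hp k, ?_⟩⟩
  show r (g^[k] a₀) (g^[k + 1] a₀)
  rw [iterate_succ_apply']
  exact (hg _ (hp k)).2

theorem mem_codes {u : List Bool} {p : ℕ} : p ∈ codes u ↔ u.getD p false = true := Iff.rfl

theorem lt_length_of_mem_codes {u : List Bool} {p : ℕ} (hp : p ∈ codes u) : p < u.length := by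
  by_contra! h
  rw [mem_codes, List.getD_eq_default _ _ h] at hp
  exact Bool.false_ne_true hp

theorem mem_codes_iff_of_isPrefix {u v : List Bool} (h : u <+: v) {p : ℕ} (hp : p < u.length) :
    p ∈ codes v ↔ p ∈ codes u := by
  rw [mem_codes, mem_codes, List.getD_eq_of_isPrefix h hp]

theorem codes_mono {u v : List Bool} (h : u <+: v) : codes u ⊆ codes v := fun _ hp =>
  (mem_codes_iff_of_isPrefix h (lt_length_of_mem_codes hp)).2 hp

theorem codes_inter_eq_of_isPrefix {u v w : List Bool} (h : u <+: v)
    (hw : w.length ≤ u.length) : codes v ∩ codes w = codes u ∩ codes w :=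
  Set.ext fun _ => and_congr_left fun hp =>
    mem_codes_iff_of_isPrefix h ((lt_length_of_mem_codes hp).trans_le hw)

theorem incomp_of_getD_ne {u v : List Bool} {d : ℕ} (hu : d < u.length) (hv : d < v.length)
    (h : u.getD d false ≠ v.getD d false) : Incomp u v :=
  ⟨fun h' => h (List.getD_eq_of_isPrefix h' hu _).symm,
    fun h' => h (List.getD_eq_of_isPrefix h' hv _)⟩

theorem le_length_of_injective_mem_codes {p : ℕ → ℕ} (hp : Injective p) {l : List Bool} {k : ℕ}
    (h : ∀ j < k, p j ∈ codes l) : k ≤ l.length := by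
  simpa using Finset.le_card_of_inj_on_range p (s := Finset.range l.length)
    (fun j hj => Finset.mem_range.2 (lt_length_of_mem_codes (h j hj)))
    (fun _ _ _ _ he => hp he)

section Trees

variable {K : Type*} {T : Set (List Bool × List K)}

theorem NodeExt.refl (s : List Bool × List K) : NodeExt s s :=
  ⟨List.prefix_refl _, List.prefix_refl _⟩

theorem NodeExt.trans {s t u : List Bool × List K} (h₁ : NodeExt s t) (h₂ : NodeExt t u) :
    NodeExt s u :=
  ⟨h₁.1.trans h₂.1, h₁.2.trans h₂.2⟩

theorem nodeExt_of_le {v : ℕ → List Bool × List K} (hchain : ∀ k, NodeExt (v k) (v (k + 1)))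
    {j k : ℕ} (h : j ≤ k) : NodeExt (v j) (v k) :=
  Nat.le_induction (NodeExt.refl _) (fun k _ ih => ih.trans (hchain k)) _ h

theorem IsTree2.mem_of_nodeExt (hT : IsTree2 T) {s t : List Bool × List K} (ht : t ∈ T)
    (h : NodeExt s t) (hs : s.1.length = s.2.length) : s ∈ T := by
  convert hT.2 t ht s.1.length using 1
  rw [hs, ← List.prefix_iff_eq_take.mp h.2, ← hs, ← List.prefix_iff_eq_take.mp h.1]

theorem IsTree2.length_lt_of_nodeExt (hT : IsTree2 T) {v w : List Bool × List K} (hv : v ∈ T)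
    (hw : w ∈ T) (h : NodeExt v w) (hne : v ≠ w) : v.1.length < w.1.length :=
  h.1.length_le.lt_of_ne fun hl => hne <| Prod.ext (h.1.eq_of_length hl)
    (h.2.eq_of_length (by rw [← hT.1 v hv, ← hT.1 w hw, hl]))

def initSeg (x : ℕ → Bool) (y : ℕ → K) (m : ℕ) : List Bool × List K :=
  (List.ofFn fun i : Fin m => x i, List.ofFn fun i : Fin m => y i)

/-- Definitionally, `proj T = {A | ∃ x y, IsBranch T x y ∧ A = {n | x n = true}}`. -/
def IsBranch (T : Set (List Bool × List K)) (x : ℕ → Bool) (y : ℕ → K) : Prop :=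
  ∀ m, initSeg x y m ∈ T

variable {x : ℕ → Bool} {y : ℕ → K}

@[simp]
theorem length_initSeg_fst (m : ℕ) : (initSeg x y m).1.length = m := by simp [initSeg]

@[simp]
theorem length_initSeg_snd (m : ℕ) : (initSeg x y m).2.length = m := by simp [initSeg]

theorem initSeg_nodeExt_of_le {m m' : ℕ} (h : m ≤ m') : NodeExt (initSeg x y m) (initSeg x y m') :=
  ⟨List.ofFn_prefix_ofFn x h, List.ofFn_prefix_ofFn y h⟩

theorem getD_initSeg_fst {m i : ℕ} (h : i < m) : (initSeg x y m).1.getD i false = x i := by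
  simp [initSeg, h]

theorem codes_initSeg_subset (m : ℕ) : codes (initSeg x y m).1 ⊆ {n | x n = true} := fun p hp => by
  have hl : p < m := by simpa using lt_length_of_mem_codes hp
  rwa [mem_codes, getD_initSeg_fst hl] at hp

theorem IsBranch.mono {S : Set (List Bool × List K)} (hST : S ⊆ T) (hx : IsBranch S x y) :
    IsBranch T x y := fun m => hST (hx m)

theorem restrictT_subset (t : List Bool × List K) : restrictT T t ⊆ T := fun _ h => h.1

theorem IsBranch.nodeExt_initSeg {t : List Bool × List K} (hx : IsBranch (restrictT T t) x y)
    {m : ℕ} (h₁ : t.1.length ≤ m) (h₂ : t.2.length ≤ m) : NodeExt t (initSeg x y m) := by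
  rcases (hx m).2 with h | h
  · have e₁ := h.1.eq_of_length (h.1.length_le.antisymm (by simpa using h₁))
    have e₂ := h.2.eq_of_length (h.2.length_le.antisymm (by simpa using h₂))
    exact ⟨e₁ ▸ List.prefix_refl _, e₂ ▸ List.prefix_refl _⟩
  · exact h

theorem IsBranch.proj_restrictT_nonempty (hx : IsBranch T x y) (m : ℕ) :
    (proj (restrictT T (initSeg x y m))).Nonempty :=
  ⟨_, x, y, fun k => ⟨hx k, (le_total k m).imp initSeg_nodeExt_of_le initSeg_nodeExt_of_le⟩, rfl⟩

theorem exists_isBranch_of_chain (hT : IsTree2 T) {v : ℕ → List Bool × List K} (hv : ∀ k, v k ∈ T)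
    (hchain : ∀ k, NodeExt (v k) (v (k + 1))) (hlen : ∀ k, k ≤ (v k).1.length) :
    ∃ x y, IsBranch T x y ∧ ∀ k, initSeg x y (v k).1.length = v k := by
  obtain ⟨x, hx⟩ := exists_ofFn_eq_of_chain (fun k => (hchain k).1) hlen
  obtain ⟨y, hy⟩ := exists_ofFn_eq_of_chain (fun k => (hchain k).2)
    (fun k => hT.1 _ (hv k) ▸ hlen k)
  have hseg : ∀ k, initSeg x y (v k).1.length = v k := fun k =>
    Prod.ext (hx k) (by simp only [initSeg]; rw [hT.1 _ (hv k)]; exact hy k)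
  refine ⟨x, y, fun m => hT.mem_of_nodeExt (hv m) ?_ (by simp), hseg⟩
  exact hseg m ▸ initSeg_nodeExt_of_le (hlen m)

theorem exists_isBranch_of_forall_exists_ext (hT : IsTree2 T) {u : List Bool × List K}
    (hu : u ∈ T) (hext : ∀ v ∈ T, NodeExt u v → ∃ w ∈ T, NodeExt v w ∧ w ≠ v) :
    ∃ x y, IsBranch T x y ∧ initSeg x y u.1.length = u := by
  obtain ⟨v, hv0, hv⟩ := exists_seq_of_forall_exists_step (p := fun v => v ∈ T ∧ NodeExt u v)
    (r := fun v w => NodeExt v w ∧ v.1.length < w.1.length) ⟨hu, .refl u⟩ fun v ⟨hv, huv⟩ => by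
      obtain ⟨w, hw, hvw, hne⟩ := hext v hv huv
      exact ⟨w, ⟨hw, huv.trans hvw⟩, hvw, hT.length_lt_of_nodeExt hv hw hvw hne.symm⟩
  have hlen : ∀ k, k ≤ (v k).1.length := by
    intro k
    induction k with
    | zero => exact Nat.zero_le _
    | succ k ih => exact ih.trans_lt (hv k).2.2
  obtain ⟨x, y, hx, hxv⟩ :=
    exists_isBranch_of_chain hT (fun k => (hv k).1.1) (fun k => (hv k).2.1) hlen
  exact ⟨x, y, hx, hv0 ▸ hxv 0⟩

end Trees

section Frozen

variable {K : Type*} {T : Set (List Bool × List K)}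

def Frozen (T : Set (List Bool × List K)) (a b : List Bool × List K) : Prop :=
  ∀ s ∈ T, ∀ t ∈ T, NodeExt a s → NodeExt b t → codes s.1 ∩ codes t.1 = codes a.1 ∩ codes b.1

theorem Frozen.mono {a b a' b' : List Bool × List K} (h : Frozen T a b) (ha' : a' ∈ T)
    (hb' : b' ∈ T) (haa' : NodeExt a a') (hbb' : NodeExt b b') : Frozen T a' b' :=
  fun s hs t ht has hbt => by
    rw [h s hs t ht (haa'.trans has) (hbb'.trans hbt), h a' ha' b' hb' haa' hbb']

theorem frozen_of_maximal {a b : List Bool × List K} (hb : ∀ w ∈ T, NodeExt b w → w = b)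
    (hl : b.1.length ≤ a.1.length) : Frozen T a b := fun _ _ t ht has hbt => by
  rw [hb t ht hbt]
  exact codes_inter_eq_of_isPrefix has.1 hl

theorem exists_isBranch_infinite_inter (hT : IsTree2 T) {u w : ℕ → List Bool × List K}
    (hu : ∀ k, u k ∈ T) (hw : ∀ k, w k ∈ T)
    (hu' : ∀ k, NodeExt (u k) (u (k + 1))) (hw' : ∀ k, NodeExt (w k) (w (k + 1)))
    (hgrow : ∀ k, ¬codes (u (k + 1)).1 ∩ codes (w (k + 1)).1 ⊆ codes (u k).1 ∩ codes (w k).1) :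
    ∃ x y x' y', IsBranch T x y ∧ IsBranch T x' y' ∧
      initSeg x y (u 0).1.length = u 0 ∧ initSeg x' y' (w 0).1.length = w 0 ∧
      ({n | x n = true} ∩ {n | x' n = true}).Infinite := by
  have hmono : ∀ {j k}, j ≤ k →
      codes (u j).1 ∩ codes (w j).1 ⊆ codes (u k).1 ∩ codes (w k).1 := fun h =>
    Set.inter_subset_inter (codes_mono (nodeExt_of_le hu' h).1) (codes_mono (nodeExt_of_le hw' h).1)
  choose p hp hpn using fun k => Set.not_subset.mp (hgrow k)
  have hp_lt : ∀ {j k}, j < k → p j ∈ codes (u k).1 ∩ codes (w k).1 := fun h => hmono h (hp _)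
  have hinj : Injective p := Injective.of_lt_imp_ne fun j k h he => hpn k (he ▸ hp_lt h)
  obtain ⟨x, y, hx, hxu⟩ := exists_isBranch_of_chain hT hu hu' fun k =>
    le_length_of_injective_mem_codes hinj fun j hj => (hp_lt hj).1
  obtain ⟨x', y', hx', hxw⟩ := exists_isBranch_of_chain hT hw hw' fun k =>
    le_length_of_injective_mem_codes hinj fun j hj => (hp_lt hj).2
  refine ⟨x, y, x', y', hx, hx', hxu 0, hxw 0,
    Set.infinite_of_injective_forall_mem hinj fun k => ⟨?_, ?_⟩⟩
  · exact codes_initSeg_subset _ (hxu (k + 1) ▸ (hp k).1)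
  · exact codes_initSeg_subset _ (hxw (k + 1) ▸ (hp k).2)

theorem exists_frozen_extension (hT : IsTree2 T) (had : AlmostDisjointFam (proj T))
    {a₀ b₀ : List Bool × List K} (ha₀ : a₀ ∈ T) (hb₀ : b₀ ∈ T) {d : ℕ} (hda : d < a₀.1.length)
    (hdb : d < b₀.1.length) (hne : a₀.1.getD d false ≠ b₀.1.getD d false) :
    ∃ a ∈ T, ∃ b ∈ T, NodeExt a₀ a ∧ NodeExt b₀ b ∧ Frozen T a b := by
  by_contra! hfr
  obtain ⟨f, hf0, hf⟩ := exists_seq_of_forall_exists_step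
    (p := fun q : (List Bool × List K) × (List Bool × List K) =>
      q.1 ∈ T ∧ q.2 ∈ T ∧ NodeExt a₀ q.1 ∧ NodeExt b₀ q.2)
    (r := fun q q' => NodeExt q.1 q'.1 ∧ NodeExt q.2 q'.2 ∧
      ¬codes q'.1.1 ∩ codes q'.2.1 ⊆ codes q.1.1 ∩ codes q.2.1) (a₀ := (a₀, b₀))
    ⟨ha₀, hb₀, .refl a₀, .refl b₀⟩ fun ⟨a, b⟩ ⟨ha, hb, ha₀a, hb₀b⟩ => by
      obtain ⟨s, hs, t, ht, has, hbt, hst⟩ : ∃ s ∈ T, ∃ t ∈ T, NodeExt a s ∧ NodeExt b t ∧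
          codes s.1 ∩ codes t.1 ≠ codes a.1 ∩ codes b.1 := by
        simpa [Frozen] using hfr a ha b hb ha₀a hb₀b
      refine ⟨(s, t), ⟨hs, ht, ha₀a.trans has, hb₀b.trans hbt⟩, has, hbt, fun hsub => hst ?_⟩
      exact hsub.antisymm (Set.inter_subset_inter (codes_mono has.1) (codes_mono hbt.1))
  obtain ⟨x, y, x', y', hx, hx', hxa, hxb, hinf⟩ := exists_isBranch_infinite_inter hT
    (fun k => (hf k).1.1) (fun k => (hf k).1.2.1) (fun k => (hf k).2.1) (fun k => (hf k).2.2.1)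
    (fun k => (hf k).2.2.2)
  simp only [hf0] at hxa hxb
  rcases had _ ⟨x, y, hx, rfl⟩ _ ⟨x', y', hx', rfl⟩ with heq | hfin
  · refine hne ?_
    rw [← hxa, ← hxb, getD_initSeg_fst hda, getD_initSeg_fst hdb]
    exact Bool.eq_iff_iff.mpr (Set.ext_iff.mp heq d)
  · exact hinf hfin

end Frozen

section DiagPairs

variable {K : Type*} {T : Set (List Bool × List K)}

theorem isDiagPair_of_frozen {a b : List Bool × List K} (ha : a ∈ T) (hb : b ∈ T)
    (hl : a.1.length = b.1.length) {d : ℕ} (hd : d < a.1.length)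
    (hne : a.1.getD d false ≠ b.1.getD d false) (hfr : Frozen T a b)
    (hproj : (proj (restrictT T a)).Nonempty) : IsDiagPair T a b :=
  ⟨ha, hb, hl, incomp_of_getD_ne hd (hl ▸ hd) hne, hfr, hproj⟩

theorem isDiagPair_initSeg_of_maximal {x : ℕ → Bool} {y : ℕ → K} (hx : IsBranch T x y)
    {c : List Bool × List K} (hc : c ∈ T) (hmax : ∀ w ∈ T, NodeExt c w → w = c) {d : ℕ}
    (hd : d < c.1.length) (hne : x d ≠ c.1.getD d false) :
    IsDiagPair T (initSeg x y c.1.length) c :=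
  isDiagPair_of_frozen (hx _) hc (by simp) (by simpa using hd) (by rwa [getD_initSeg_fst hd])
    (frozen_of_maximal hmax (by simp)) (hx.proj_restrictT_nonempty _)

theorem getD_fst_of_initSeg_nodeExt {x : ℕ → Bool} {y : ℕ → K} {m : ℕ} {v : List Bool × List K}
    (h : NodeExt (initSeg x y m) v) {i : ℕ} (hi : i < m) : v.1.getD i false = x i := by
  rw [List.getD_eq_of_isPrefix h.1 (by simpa using hi), getD_initSeg_fst hi]

theorem exists_isDiagPair_of_forall_exists_ext (hT : IsTree2 T) (had : AlmostDisjointFam (proj T))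
    {t : List Bool × List K} {x x' : ℕ → Bool} {y y' : ℕ → K} (hx : IsBranch (restrictT T t) x y)
    (hx' : IsBranch (restrictT T t) x' y') {d : ℕ} (hne : x d ≠ x' d)
    (hext : ∀ c ∈ T, NodeExt t c → d < c.1.length → ∃ w ∈ T, NodeExt c w ∧ w ≠ c) :
    ∃ a b, IsDiagPair T a b ∧ NodeExt t a ∧ NodeExt t b := by
  set M := d + 1 + t.1.length + t.2.length
  have hdM : d < M := by omega
  obtain ⟨s, hs, s', hs', hxs, hxs', hfr⟩ := exists_frozen_extension hT had
    (hx M).1 (hx' M).1 (by simpa using hdM) (by simpa using hdM)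
    (by rwa [getD_initSeg_fst hdM, getD_initSeg_fst hdM])
  have hts : NodeExt t s := (hx.nodeExt_initSeg (by omega) (by omega)).trans hxs
  have hts' : NodeExt t s' := (hx'.nodeExt_initSeg (by omega) (by omega)).trans hxs'
  have hds : d < s.1.length := hdM.trans_le (by simpa using hxs.1.length_le)
  have hds' : d < s'.1.length := hdM.trans_le (by simpa using hxs'.1.length_le)
  -- every node above `s` or `s'` lies above `t` and is longer than `d`, so it is no dead end
  obtain ⟨z, v, hz, hzs⟩ := exists_isBranch_of_forall_exists_ext hT hs fun c hc hsc =>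
    hext c hc (hts.trans hsc) (hds.trans_le hsc.1.length_le)
  obtain ⟨z', v', hz', hzs'⟩ := exists_isBranch_of_forall_exists_ext hT hs' fun c hc hsc =>
    hext c hc (hts'.trans hsc) (hds'.trans_le hsc.1.length_le)
  set ℓ := max s.1.length s'.1.length
  have hsa : NodeExt s (initSeg z v ℓ) := hzs ▸ initSeg_nodeExt_of_le (le_max_left _ _)
  have hsb : NodeExt s' (initSeg z' v' ℓ) := hzs' ▸ initSeg_nodeExt_of_le (le_max_right _ _)
  have hdℓ : d < ℓ := hds.trans_le (le_max_left _ _)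
  refine ⟨_, _, isDiagPair_of_frozen (hz ℓ) (hz' ℓ) (by simp) (by simpa using hdℓ) ?_
    (hfr.mono (hz ℓ) (hz' ℓ) hsa hsb) (hz.proj_restrictT_nonempty ℓ), hts.trans hsa, hts'.trans hsb⟩
  rwa [getD_fst_of_initSeg_nodeExt (hxs.trans hsa) hdM,
    getD_fst_of_initSeg_nodeExt (hxs'.trans hsb) hdM]

theorem exists_isDiagPair_above (hT : IsTree2 T) (had : AlmostDisjointFam (proj T))
    {t : List Bool × List K} {A B : Set ℕ} (hA : A ∈ proj (restrictT T t))
    (hB : B ∈ proj (restrictT T t)) (hAB : A ≠ B) :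
    ∃ a b, IsDiagPair T a b ∧ NodeExt t a ∧ NodeExt t b := by
  obtain ⟨x, y, hx : IsBranch _ x y, rfl⟩ := hA
  obtain ⟨x', y', hx' : IsBranch _ x' y', rfl⟩ := hB
  obtain ⟨d, hd⟩ : ∃ d, x d ≠ x' d := by
    by_contra! h
    exact hAB (by rw [funext h])
  by_cases hdead : ∃ c ∈ T, NodeExt t c ∧ d < c.1.length ∧ ∀ w ∈ T, NodeExt c w → w = c
  · obtain ⟨c, hc, htc, hdc, hmax⟩ := hdead
    have ht₁ : t.1.length ≤ c.1.length := htc.1.length_le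
    have ht₂ : t.2.length ≤ c.1.length := hT.1 c hc ▸ htc.2.length_le
    by_cases hxc : x d = c.1.getD d false
    · exact ⟨_, c, isDiagPair_initSeg_of_maximal (hx'.mono (restrictT_subset t)) hc hmax hdc
        fun h => hd (hxc.trans h.symm), hx'.nodeExt_initSeg ht₁ ht₂, htc⟩
    · exact ⟨_, c, isDiagPair_initSeg_of_maximal (hx.mono (restrictT_subset t)) hc hmax hdc hxc,
        hx.nodeExt_initSeg ht₁ ht₂, htc⟩
  · push Not at hdead
    exact exists_isDiagPair_of_forall_exists_ext hT had hx hx' hd hdead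

theorem DiagSeqUpTo.update {n : ℕ} {t0 t1 : ℕ → List Bool × List K} {a b : List Bool × List K}
    (hd : DiagSeqUpTo T (n + 1) t0 t1) (hab : IsDiagPair T a b) (ha : NodeExt (t1 n) a)
    (hb : NodeExt (t1 n) b) :
    DiagSeqUpTo T (n + 2) (update t0 (n + 1) a) (update t1 (n + 1) b) := by
  constructor
  · intro i hi
    rcases Nat.lt_succ_iff_lt_or_eq.mp hi with hi | rfl
    · rw [update_of_ne hi.ne, update_of_ne hi.ne]
      exact hd.1 i hi
    · simpa using hab
  · intro i hi
    rcases Nat.lt_succ_iff_lt_or_eq.mp (Nat.succ_lt_succ_iff.mp hi) with hi | rfl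
    · rw [update_of_ne (by omega), update_of_ne (by omega), update_of_ne (by omega)]
      exact hd.2 i (by omega)
    · rw [update_of_ne (by omega), update_self, update_self]
      exact ⟨ha, hb⟩

end DiagPairs

theorem terminal_top_leaf_subsingleton
    (T : Set (List Bool × List ℕ)) (hT : IsTree2 T)
    (had : AlmostDisjointFam (proj T))
    (n : ℕ) (t0 t1 : ℕ → List Bool × List ℕ)
    (hd : DiagSeqUpTo T (n + 1) t0 t1)
    (hterm : ¬ ∃ m, n + 1 < m ∧ ∃ s0 s1 : ℕ → List Bool × List ℕ,
        DiagSeqUpTo T m s0 s1 ∧ ∀ i ≤ n, s0 i = t0 i ∧ s1 i = t1 i) :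
    (proj (restrictT T (t1 n))).Subsingleton := by
  intro A hA B hB
  by_contra hAB
  obtain ⟨a, b, hab, ha, hb⟩ := exists_isDiagPair_above hT had hA hB hAB
  refine hterm ⟨n + 2, by omega, _, _, hd.update hab ha hb, fun i hi => ?_⟩
  rw [update_of_ne (by omega), update_of_ne (by omega)]
  exact ⟨rfl, rfl⟩
end
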